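/- Suppose for some constants C_μ > 0 and λ > 0 a nonnegative quantity Φ(B) assigned to balls satisfies, for every ball B(z,ρ) with B(z,2ρ) contained in B(x₀,2R): λ ∫_{B(z,ρ)} |u|² ≤ (C_μ/ρ²) ∫_{B(z,2ρ)} |u|². Then for every integer k > 0 there exists C_k = C_k(C_μ, k) such that ∫_{B(x₀,R)} |u|² ≤ C_k (λR²)^{−k} ∫_{B(x₀,2R)} |u|² whenever λR² ≥ 1. -/

import Mathlib

open MeasureTheory Metric

set_option maxHeartbeats 1600000 in
theorem stmt11 (d : ℕ) (Cμ : ℝ) (hCμ : 0 < Cμ) (k : ℕ) (hk : 0 < k) :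
    ∃ Ck : ℝ, 0 < Ck ∧
      ∀ (u : EuclideanSpace ℝ (Fin d) → ℝ) (x₀ : EuclideanSpace ℝ (Fin d)) (R lam : ℝ),
        0 < R → 0 < lam → 1 ≤ lam * R ^ 2 →
        (∀ (z : EuclideanSpace ℝ (Fin d)) (ρ : ℝ), 0 < ρ →
          ball z (2 * ρ) ⊆ ball x₀ (2 * R) →
          lam * ∫ w in ball z ρ, (u w) ^ 2 ≤
            (Cμ / ρ ^ 2) * ∫ w in ball z (2 * ρ), (u w) ^ 2) →
        ∫ w in ball x₀ R, (u w) ^ 2 ≤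
          Ck * (lam * R ^ 2) ^ (-(k:ℝ)) * ∫ w in ball x₀ (2 * R), (u w) ^ 2 := by
  classical
  set E := EuclideanSpace ℝ (Fin d)
  have hkR : (0:ℝ) < k := by exact_mod_cast hk
  -- a finite cover of the unit-scale ball `ball 0 2` by balls of radius 1/(3k)
  have htb : TotallyBounded (ball (0 : E) 2) :=
    (isCompact_closedBall _ _).totallyBounded.subset ball_subset_closedBall
  obtain ⟨t, htfin, htcov⟩ := (totallyBounded_iff.mp htb) (1 / (3 * k)) (by positivity)
  set T : Finset E := htfin.toFinset with hT
  set N : ℕ := T.card with hN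
  set A : ℝ := 9 * (N + 1) * Cμ * k ^ 2 with hA
  have hApos : 0 < A := by positivity
  refine ⟨A ^ k, by positivity, ?_⟩
  intro u x₀ R lam hR hlam hlamR hyp
  set f : E → ℝ := fun w => u w ^ 2 with hf
  have hfnn : ∀ w, 0 ≤ f w := fun w => sq_nonneg _
  have hrpow : (lam * R ^ 2) ^ (-(k:ℝ)) = ((lam * R ^ 2) ^ k)⁻¹ := by
    rw [← Real.rpow_natCast (lam * R ^ 2) k, ← Real.rpow_neg (by positivity)]
  by_cases hint : IntegrableOn f (ball x₀ (2 * R)) volume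
  · -- main case: iterate the Caccioppoli inequality
    set ρ : ℝ := R / (3 * k) with hρ
    have hρpos : 0 < ρ := by positivity
    set z : E → E := fun y => x₀ + R • y with hz
    set r : ℕ → ℝ := fun j => R + j * (R / k) with hr
    have hrk : r k = 2 * R := by simp only [hr]; field_simp; ring
    have hrmono : ∀ j : ℕ, j ≤ k → r j ≤ 2 * R := by
      intro j hj
      rw [← hrk]
      simp only [hr]
      have : (j:ℝ) ≤ k := by exact_mod_cast hj
      nlinarith [div_nonneg hR.le hkR.le]
    -- the covering at scale ρ
    have hcov : ∀ x ∈ ball x₀ (2 * R), ∃ y ∈ T, x ∈ ball (z y) ρ := by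
      intro x hx
      have hy : R⁻¹ • (x - x₀) ∈ ball (0 : E) 2 := by
        rw [mem_ball, dist_zero_right, norm_smul, norm_inv, Real.norm_of_nonneg hR.le]
        rw [mem_ball, dist_eq_norm] at hx
        rw [inv_mul_lt_iff₀ hR]
        linarith
      obtain ⟨y, hyT, hxy⟩ := Set.mem_iUnion₂.mp (htcov hy)
      refine ⟨y, htfin.mem_toFinset.mpr hyT, ?_⟩
      rw [mem_ball, dist_eq_norm]
      have : x - z y = R • (R⁻¹ • (x - x₀) - y) := by
        simp only [hz, smul_sub, smul_smul, mul_inv_cancel₀ hR.ne', one_smul]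
        abel
      rw [this, norm_smul, Real.norm_of_nonneg hR.le]
      rw [mem_ball, dist_eq_norm] at hxy
      calc R * ‖R⁻¹ • (x - x₀) - y‖ < R * (1 / (3 * k)) := by
            exact mul_lt_mul_of_pos_left hxy hR
        _ = ρ := by rw [hρ]; ring
    -- one step of the iteration
    have step : ∀ j : ℕ, j + 1 ≤ k →
        ∫ w in ball x₀ (r j), f w ≤ (A / (lam * R ^ 2)) * ∫ w in ball x₀ (r (j+1)), f w := by
      intro j hj
      set S : Finset E := T.filter (fun y => (ball (z y) ρ ∩ ball x₀ (r j)).Nonempty) with hS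
      have hrj2R : r j ≤ 2 * R := hrmono j (le_trans (Nat.le_succ j) hj)
      have hrj12R : r (j+1) ≤ 2 * R := hrmono (j+1) hj
      -- balls indexed by S fit in the next ball
      have hfit : ∀ y ∈ S, ball (z y) (2 * ρ) ⊆ ball x₀ (r (j+1)) := by
        intro y hyS
        obtain ⟨w, hw1, hw2⟩ := (Finset.mem_filter.mp hyS).2
        intro p hp
        rw [mem_ball] at hp hw1 hw2 ⊢
        have h3ρ : 3 * ρ = R / k := by rw [hρ]; field_simp
        have hd : dist p x₀ ≤ dist p (z y) + dist (z y) w + dist w x₀ := by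
          calc dist p x₀ ≤ dist p (z y) + dist (z y) x₀ := dist_triangle _ _ _
            _ ≤ dist p (z y) + (dist (z y) w + dist w x₀) := by
                linarith [dist_triangle (z y) w x₀]
            _ = _ := by ring
        have : dist (z y) w = dist w (z y) := dist_comm _ _
        have hrj1 : r (j+1) = r j + 3 * ρ := by
          simp only [hr, h3ρ]; push_cast; ring
        rw [hrj1]
        linarith
      have hSsub2R : ∀ y ∈ S, ball (z y) (2 * ρ) ⊆ ball x₀ (2 * R) :=
        fun y hy => (hfit y hy).trans (ball_subset_ball hrj12R)
      -- covering of ball x₀ (r j) by the balls of S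
      have hcovS : ball x₀ (r j) ⊆ ⋃ y ∈ S, ball (z y) ρ := by
        intro x hx
        have hx2R : x ∈ ball x₀ (2 * R) := mem_ball.mpr (lt_of_lt_of_le (mem_ball.mp hx) hrj2R)
        obtain ⟨y, hyT, hxy⟩ := hcov x hx2R
        exact Set.mem_iUnion₂.mpr ⟨y, Finset.mem_filter.mpr ⟨hyT, ⟨x, hxy, hx⟩⟩, hxy⟩
      -- measure comparison
      have hmeas : volume.restrict (ball x₀ (r j)) ≤
          ∑ y ∈ S, volume.restrict (ball (z y) ρ) := by
        refine le_trans (Measure.restrict_mono hcovS le_rfl) ?_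
        rw [Measure.le_iff]
        intro s hs
        rw [Measure.restrict_apply hs, Measure.finset_sum_apply]
        calc volume (s ∩ ⋃ y ∈ S, ball (z y) ρ)
            = volume (⋃ y ∈ S, s ∩ ball (z y) ρ) := by rw [Set.inter_iUnion₂]
          _ ≤ ∑ y ∈ S, volume (s ∩ ball (z y) ρ) := measure_biUnion_finset_le S _
          _ = ∑ y ∈ S, volume.restrict (ball (z y) ρ) s := by
              refine Finset.sum_congr rfl fun y hy => ?_
              rw [Measure.restrict_apply hs]
      have hintS : ∀ y ∈ S, IntegrableOn f (ball (z y) ρ) volume := fun y hy =>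
        hint.mono_set ((ball_subset_ball (by linarith)).trans (hSsub2R y hy))
      have hint2S : ∀ y ∈ S, IntegrableOn f (ball (z y) (2 * ρ)) volume := fun y hy =>
        hint.mono_set (hSsub2R y hy)
      have hintr1 : IntegrableOn f (ball x₀ (r (j+1))) volume :=
        hint.mono_set (ball_subset_ball hrj12R)
      have hI1nn : 0 ≤ ∫ w in ball x₀ (r (j+1)), f w :=
        integral_nonneg hfnn
      -- chain of inequalities
      have h1 : ∫ w in ball x₀ (r j), f w ≤
          ∑ y ∈ S, ∫ w in ball (z y) ρ, f w := by
        rw [← integral_finset_sum_measure hintS]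
        exact integral_mono_measure hmeas
          (Filter.Eventually.of_forall hfnn)
          (integrable_finset_sum_measure.mpr hintS)
      have h2 : ∀ y ∈ S, ∫ w in ball (z y) ρ, f w ≤
          Cμ / ρ ^ 2 / lam * ∫ w in ball x₀ (r (j+1)), f w := by
        intro y hy
        have hc := hyp (z y) ρ hρpos (hSsub2R y hy)
        have hmono : ∫ w in ball (z y) (2 * ρ), f w ≤ ∫ w in ball x₀ (r (j+1)), f w :=
          setIntegral_mono_set hintr1 (Filter.Eventually.of_forall hfnn)
            (HasSubset.Subset.eventuallyLE (hfit y hy))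
        have : lam * ∫ w in ball (z y) ρ, f w ≤
            Cμ / ρ ^ 2 * ∫ w in ball x₀ (r (j+1)), f w :=
          le_trans hc (mul_le_mul_of_nonneg_left hmono (by positivity))
        rw [div_mul_eq_mul_div, le_div_iff₀ hlam, mul_comm _ lam]
        exact this
      have h3 : ∑ y ∈ S, ∫ w in ball (z y) ρ, f w ≤
          (S.card : ℝ) * (Cμ / ρ ^ 2 / lam * ∫ w in ball x₀ (r (j+1)), f w) := by
        have := Finset.sum_le_card_nsmul S (fun y => ∫ w in ball (z y) ρ, f w)
          (Cμ / ρ ^ 2 / lam * ∫ w in ball x₀ (r (j+1)), f w) h2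
        simpa [nsmul_eq_mul] using this
      have hcard : (S.card : ℝ) ≤ (N : ℝ) + 1 := by
        have h := Finset.card_le_card (Finset.filter_subset (fun y => (ball (z y) ρ ∩ ball x₀ (r j)).Nonempty) T)
        have h' : (S.card : ℝ) ≤ (N : ℝ) := by exact_mod_cast h
        linarith
      have hρ2 : Cμ / ρ ^ 2 = 9 * Cμ * k ^ 2 / R ^ 2 := by
        rw [hρ]; field_simp; ring
      have h4 : (S.card : ℝ) * (Cμ / ρ ^ 2 / lam * ∫ w in ball x₀ (r (j+1)), f w) ≤
          (A / (lam * R ^ 2)) * ∫ w in ball x₀ (r (j+1)), f w := by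
        have hcoef : (S.card : ℝ) * (Cμ / ρ ^ 2 / lam) ≤ A / (lam * R ^ 2) := by
          rw [hρ2, hA, div_div, mul_div_assoc', div_le_div_iff₀ (by positivity) (by positivity)]
          have h9 : (0:ℝ) ≤ 9 * Cμ * (k:ℝ) ^ 2 := by positivity
          have hkey := mul_le_mul_of_nonneg_right
            (mul_le_mul_of_nonneg_right hcard h9) (mul_pos hlam (pow_pos hR 2)).le
          nlinarith [hkey]
        calc (S.card : ℝ) * (Cμ / ρ ^ 2 / lam * ∫ w in ball x₀ (r (j+1)), f w)
            = (S.card : ℝ) * (Cμ / ρ ^ 2 / lam) * ∫ w in ball x₀ (r (j+1)), f w := by ring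
          _ ≤ (A / (lam * R ^ 2)) * ∫ w in ball x₀ (r (j+1)), f w :=
              mul_le_mul_of_nonneg_right hcoef hI1nn
      exact le_trans h1 (le_trans h3 h4)
    -- iterate
    have key : ∀ j : ℕ, j ≤ k →
        ∫ w in ball x₀ R, f w ≤ (A / (lam * R ^ 2)) ^ j * ∫ w in ball x₀ (r j), f w := by
      intro j
      induction j with
      | zero => intro _; simp [hr]
      | succ n ih =>
        intro hn
        have h1 := ih (le_trans (Nat.le_succ n) hn)
        have h2 := step n hn
        calc ∫ w in ball x₀ R, f w
            ≤ (A / (lam * R ^ 2)) ^ n * ∫ w in ball x₀ (r n), f w := h1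
          _ ≤ (A / (lam * R ^ 2)) ^ n * ((A / (lam * R ^ 2)) * ∫ w in ball x₀ (r (n+1)), f w) :=
              mul_le_mul_of_nonneg_left h2 (by positivity)
          _ = (A / (lam * R ^ 2)) ^ (n+1) * ∫ w in ball x₀ (r (n+1)), f w := by ring
    have hfin := key k le_rfl
    rw [hrk] at hfin
    calc ∫ w in ball x₀ R, f w
        ≤ (A / (lam * R ^ 2)) ^ k * ∫ w in ball x₀ (2 * R), f w := hfin
      _ = A ^ k * (lam * R ^ 2) ^ (-(k:ℝ)) * ∫ w in ball x₀ (2 * R), f w := by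
          rw [hrpow, div_pow, div_eq_mul_inv]
  · -- degenerate case: the integral over the big ball is (junk) zero
    have hz : ∫ w in ball x₀ (2 * R), f w = 0 := integral_undef hint
    have hc := hyp x₀ R hR (subset_refl _)
    rw [hz, mul_zero] at hc
    have : ∫ w in ball x₀ R, f w ≤ 0 := by
      by_contra h
      push_neg at h
      nlinarith
    calc ∫ w in ball x₀ R, f w ≤ 0 := this
      _ = A ^ k * (lam * R ^ 2) ^ (-(k:ℝ)) * ∫ w in ball x₀ (2 * R), f w := by
          rw [hz, mul_zero]
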